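/- The map F : ℝ × (ℝ⁴ \ {0}) → ℝ⁴ defined by F(t,x) = t·x/|x|² is proper biharmonic with respect to the product Euclidean metric: Δ²_{(t,x)} F = 0 but Δ_{(t,x)} F ≢ 0, where Δ_{(t,x)} = ∂²/∂t² + Δ_x. -/

import Mathlib

/-- The Euclidean Laplacian `Δ_{(t,x)} = ∂²/∂t² + Δ_x` on `ℝ × ℝ⁴`. -/
noncomputable def lapProd
    (u : ℝ × EuclideanSpace ℝ (Fin 4) → ℝ)
    (p : ℝ × EuclideanSpace ℝ (Fin 4)) : ℝ :=
  fderiv ℝ (fun q => fderiv ℝ u q ((1 : ℝ), 0)) p ((1 : ℝ), 0) +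
  (∑ i : Fin 4,
    fderiv ℝ (fun q => fderiv ℝ u q ((0 : ℝ), EuclideanSpace.single i 1)) p
      ((0 : ℝ), EuclideanSpace.single i 1))

noncomputable section
namespace BiharmAux

abbrev E4 : Type := EuclideanSpace ℝ (Fin 4)
def ee (i : Fin 4) : E4 := EuclideanSpace.single i 1
def rr (x : E4) : ℝ := ∑ i, x i * x i
def RR (x : E4) : E4 →L[ℝ] ℝ := ∑ i, (2 * x i) • (EuclideanSpace.proj i)

lemma hasFDerivAt_coord (i : Fin 4) (x : E4) :
    HasFDerivAt (fun y : E4 => y i) (EuclideanSpace.proj (𝕜 := ℝ) i) x :=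
  (EuclideanSpace.proj (𝕜 := ℝ) i).hasFDerivAt

lemma hasFDerivAt_rr (x : E4) : HasFDerivAt rr (RR x) x := by
  unfold rr RR
  apply HasFDerivAt.fun_sum
  intro i _
  have h := (hasFDerivAt_coord i x).mul (hasFDerivAt_coord i x)
  refine h.congr_fderiv ?_
  ext v
  simp [two_mul]
  ring

lemma hasFDerivAt_inv'' {f : E4 → ℝ} {f' : E4 →L[ℝ] ℝ} {x : E4}
    (hf : HasFDerivAt f f' x) (h0 : f x ≠ 0) :
    HasFDerivAt (fun y => (f y)⁻¹) ((-(f x * f x)⁻¹) • f') x := by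
  have h := (hasFDerivAt_inv' (𝕜 := ℝ) h0).comp x hf
  refine h.congr_fderiv ?_
  ext v
  simp [ContinuousLinearMap.mulLeftRight_apply, mul_inv]
  ring

lemma RR_apply_ee (y : E4) (i : Fin 4) : RR y (ee i) = 2 * y i := by
  simp [RR, ee, ContinuousLinearMap.sum_apply, EuclideanSpace.single_apply]

lemma proj_ee (j i : Fin 4) :
    EuclideanSpace.proj (𝕜 := ℝ) j (ee i) = if j = i then (1:ℝ) else 0 := by
  simp [ee, EuclideanSpace.single_apply]

lemma rr_expand (x : E4) : rr x = x 0 * x 0 + x 1 * x 1 + x 2 * x 2 + x 3 * x 3 := by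
  simp [rr, Fin.sum_univ_four]

lemma continuous_rr : Continuous rr := by
  unfold rr
  fun_prop

lemma rr_ne_zero {x : E4} (hx : x ≠ 0) : rr x ≠ 0 := by
  have h : ‖x‖ ^ 2 = rr x := by
    unfold rr
    rw [EuclideanSpace.norm_eq, Real.sq_sqrt (by positivity)]
    exact Finset.sum_congr rfl fun i _ => by rw [Real.norm_eq_abs, sq_abs, sq]
  rw [← h]
  exact pow_ne_zero 2 (norm_ne_zero_iff.2 hx)

lemma norm_sq_rr (y : E4) : ‖y‖ ^ 2 = rr y := by
  unfold rr
  rw [EuclideanSpace.norm_eq, Real.sq_sqrt (by positivity)]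
  exact Finset.sum_congr rfl fun i _ => by rw [Real.norm_eq_abs, sq_abs, sq]

/-! ### The master lemma on the product space -/

theorem lapProd_eq (g : E4 → ℝ) (G : E4 → E4 →L[ℝ] ℝ)
    (h : Fin 4 → E4 → ℝ) (H : Fin 4 → E4 → E4 →L[ℝ] ℝ)
    (U : Set E4) (hU : IsOpen U)
    (hg : ∀ y ∈ U, HasFDerivAt g (G y) y)
    (hGh : ∀ i, ∀ y ∈ U, G y (ee i) = h i y)
    (hh : ∀ i, ∀ y ∈ U, HasFDerivAt (h i) (H i y) y)
    (t : ℝ) (x : E4) (hx : x ∈ U) :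
    lapProd (fun q => q.1 * g q.2) (t, x) = t * ∑ i, H i x (ee i) := by
  have hVopen : IsOpen {q : ℝ × E4 | q.2 ∈ U} := hU.preimage continuous_snd
  have hmem : (t, x) ∈ {q : ℝ × E4 | q.2 ∈ U} := hx
  have hu : ∀ q : ℝ × E4, q.2 ∈ U →
      HasFDerivAt (fun q : ℝ × E4 => q.1 * g q.2)
        (q.1 • ((G q.2).comp (ContinuousLinearMap.snd ℝ ℝ E4)) +
          (g q.2) • (ContinuousLinearMap.fst ℝ ℝ E4)) q := by
    intro q hq
    exact hasFDerivAt_fst.mul ((hg q.2 hq).comp q hasFDerivAt_snd)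
  have hA : (fun q => fderiv ℝ (fun q : ℝ × E4 => q.1 * g q.2) q ((1:ℝ), 0))
      =ᶠ[nhds (t, x)] fun q => g q.2 := by
    refine Filter.eventuallyEq_of_mem (hVopen.mem_nhds hmem) ?_
    intro q hq
    show fderiv ℝ (fun q : ℝ × E4 => q.1 * g q.2) q ((1:ℝ), 0) = g q.2
    rw [(hu q hq).fderiv]
    simp
  have hgsnd : HasFDerivAt (fun q : ℝ × E4 => g q.2)
      ((G x).comp (ContinuousLinearMap.snd ℝ ℝ E4)) (t, x) :=
    (hg x hx).comp (t, x) hasFDerivAt_snd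
  have hterm1 : fderiv ℝ (fun q => fderiv ℝ (fun q : ℝ × E4 => q.1 * g q.2) q ((1:ℝ), 0))
      (t, x) ((1:ℝ), 0) = 0 := by
    rw [hA.fderiv_eq, hgsnd.fderiv]
    simp
  have hterm2 : ∀ i : Fin 4,
      fderiv ℝ (fun q => fderiv ℝ (fun q : ℝ × E4 => q.1 * g q.2) q ((0:ℝ), ee i))
        (t, x) ((0:ℝ), ee i) = t * H i x (ee i) := by
    intro i
    have hB : (fun q => fderiv ℝ (fun q : ℝ × E4 => q.1 * g q.2) q ((0:ℝ), ee i))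
        =ᶠ[nhds (t, x)] fun q => q.1 * h i q.2 := by
      refine Filter.eventuallyEq_of_mem (hVopen.mem_nhds hmem) ?_
      intro q hq
      show fderiv ℝ (fun q : ℝ × E4 => q.1 * g q.2) q ((0:ℝ), ee i) = q.1 * h i q.2
      rw [(hu q hq).fderiv]
      simp [hGh i q.2 hq]
    have hBd : HasFDerivAt (fun q : ℝ × E4 => q.1 * h i q.2)
        ((t, x).1 • ((H i x).comp (ContinuousLinearMap.snd ℝ ℝ E4)) +
          (h i x) • (ContinuousLinearMap.fst ℝ ℝ E4)) (t, x) :=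
      hasFDerivAt_fst.mul ((hh i x hx).comp (t, x) hasFDerivAt_snd)
    rw [hB.fderiv_eq, hBd.fderiv]
    simp
  show _ + _ = _
  simp only [show ∀ i : Fin 4, (EuclideanSpace.single i 1 : E4) = ee i from fun _ => rfl]
  rw [hterm1, Finset.sum_congr rfl fun i _ => hterm2 i, ← Finset.mul_sum]
  ring

theorem lapProd_congr' (u v : ℝ × E4 → ℝ) (V : Set (ℝ × E4)) (hV : IsOpen V)
    (huv : ∀ q ∈ V, u q = v q) (p : ℝ × E4) (hp : p ∈ V) :
    lapProd u p = lapProd v p := by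
  have hev : ∀ q ∈ V, fderiv ℝ u q = fderiv ℝ v q := by
    intro q hq
    apply Filter.EventuallyEq.fderiv_eq
    exact Filter.eventuallyEq_of_mem (hV.mem_nhds hq) huv
  have h1 : ∀ w : ℝ × E4,
      fderiv ℝ (fun q => fderiv ℝ u q w) p = fderiv ℝ (fun q => fderiv ℝ v q w) p := by
    intro w
    apply Filter.EventuallyEq.fderiv_eq
    exact Filter.eventuallyEq_of_mem (hV.mem_nhds hp) (fun q hq => by rw [hev q hq])
  unfold lapProd
  rw [h1]
  congr 1
  exact Finset.sum_congr rfl fun i _ => by rw [h1]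

/-! ### First Laplacian: `g₁(y) = y a / |y|²` -/

def G1 (a : Fin 4) (y : E4) : E4 →L[ℝ] ℝ :=
  y a • ((-(rr y * rr y)⁻¹) • RR y) + (rr y)⁻¹ • EuclideanSpace.proj a

def h1 (a i : Fin 4) (y : E4) : ℝ :=
  (if a = i then (1:ℝ) else 0) * (rr y)⁻¹ - 2 * y a * y i * (rr y * rr y)⁻¹

lemma hG1 (a : Fin 4) (y : E4) (hy : rr y ≠ 0) :
    HasFDerivAt (fun y : E4 => y a * (rr y)⁻¹) (G1 a y) y :=
  (hasFDerivAt_coord a y).mul (hasFDerivAt_inv'' (hasFDerivAt_rr y) hy)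

lemma hG1_ee (a i : Fin 4) (y : E4) : G1 a y (ee i) = h1 a i y := by
  simp [G1, h1, ee, EuclideanSpace.single_apply, RR, ContinuousLinearMap.sum_apply,
    mul_ite]
  ring

def H1 (a i : Fin 4) (y : E4) : E4 →L[ℝ] ℝ :=
  (if a = i then (1:ℝ) else 0) • ((-(rr y * rr y)⁻¹) • RR y) -
  ((2 * y a * y i) • ((-((rr y * rr y) * (rr y * rr y))⁻¹) • (rr y • RR y + rr y • RR y)) +
    (rr y * rr y)⁻¹ • ((2 * y a) • (EuclideanSpace.proj i) +
      y i • ((2:ℝ) • (EuclideanSpace.proj (𝕜 := ℝ) a))))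

lemma hH1 (a i : Fin 4) (y : E4) (hy : rr y ≠ 0) :
    HasFDerivAt (h1 a i) (H1 a i y) y := by
  unfold h1 H1
  exact ((hasFDerivAt_inv'' (hasFDerivAt_rr y) hy).const_mul _).sub
    ((((hasFDerivAt_coord a y).const_mul (2:ℝ)).mul (hasFDerivAt_coord i y)).mul
      (hasFDerivAt_inv'' ((hasFDerivAt_rr y).mul (hasFDerivAt_rr y)) (mul_ne_zero hy hy)))

lemma sum1 (a : Fin 4) (x : E4) (hx : rr x ≠ 0) :
    ∑ i, H1 a i x (ee i) = -4 * x a * (rr x * rr x)⁻¹ := by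
  have hexp : ∀ i, H1 a i x (ee i) =
      (-4 * (rr x * rr x)⁻¹) * (if a = i then x i else 0) +
      (8 * x a * rr x * ((rr x * rr x) * (rr x * rr x))⁻¹) * (x i * x i) +
      (-2 * x a * (rr x * rr x)⁻¹) := by
    intro i
    simp only [H1, ContinuousLinearMap.sub_apply, ContinuousLinearMap.add_apply,
      ContinuousLinearMap.smul_apply, smul_eq_mul, RR_apply_ee, proj_ee]
    rcases eq_or_ne a i with h | h <;> simp [h] <;> ring
  rw [Finset.sum_congr rfl fun i _ => hexp i]
  rw [Finset.sum_add_distrib, Finset.sum_add_distrib, ← Finset.mul_sum, ← Finset.mul_sum,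
    Finset.sum_ite_eq, Finset.sum_const]
  simp only [Finset.mem_univ, if_true, Finset.card_univ, Fintype.card_fin, nsmul_eq_mul]
  have hs : ∑ i, x i * x i = rr x := rfl
  rw [hs]
  field_simp
  ring

theorem lap1 (a : Fin 4) (t : ℝ) (x : E4) (hx : x ≠ 0) :
    lapProd (fun q => q.1 * q.2 a / ‖q.2‖ ^ 2) (t, x)
      = t * (-4 * x a * (rr x * rr x)⁻¹) := by
  have hrx : rr x ≠ 0 := rr_ne_zero hx
  have hU : IsOpen {y : E4 | rr y ≠ 0} := IsOpen.preimage continuous_rr isOpen_ne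
  have hfun : (fun q : ℝ × E4 => q.1 * q.2 a / ‖q.2‖ ^ 2)
      = fun q : ℝ × E4 => q.1 * (q.2 a * (rr q.2)⁻¹) := by
    funext q
    rw [norm_sq_rr, div_eq_mul_inv, mul_assoc]
  rw [hfun]
  have key := lapProd_eq (fun y : E4 => y a * (rr y)⁻¹) (G1 a) (h1 a) (H1 a)
    {y : E4 | rr y ≠ 0} hU (fun y hy => hG1 a y hy) (fun i y _ => hG1_ee a i y)
    (fun i y hy => hH1 a i y hy) t x hrx
  rw [key, sum1 a x hrx]

/-! ### Second Laplacian: `g₂(y) = -4 y a / |y|⁴` -/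

def G2 (a : Fin 4) (y : E4) : E4 →L[ℝ] ℝ :=
  (-4 * y a) • ((-((rr y * rr y) * (rr y * rr y))⁻¹) • (rr y • RR y + rr y • RR y)) +
    (rr y * rr y)⁻¹ • ((-4 : ℝ) • (EuclideanSpace.proj (𝕜 := ℝ) a))

def h2 (a i : Fin 4) (y : E4) : ℝ :=
  (if a = i then (1:ℝ) else 0) * (-4) * (rr y * rr y)⁻¹ +
    16 * y a * y i * rr y * ((rr y * rr y) * (rr y * rr y))⁻¹

lemma hG2 (a : Fin 4) (y : E4) (hy : rr y ≠ 0) :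
    HasFDerivAt (fun y : E4 => -4 * y a * (rr y * rr y)⁻¹) (G2 a y) y :=
  ((hasFDerivAt_coord a y).const_mul (-4 : ℝ)).mul
    (hasFDerivAt_inv'' ((hasFDerivAt_rr y).mul (hasFDerivAt_rr y)) (mul_ne_zero hy hy))

lemma hG2_ee (a i : Fin 4) (y : E4) : G2 a y (ee i) = h2 a i y := by
  simp only [G2, h2, ContinuousLinearMap.add_apply, ContinuousLinearMap.smul_apply,
    smul_eq_mul, RR_apply_ee, proj_ee]
  rcases eq_or_ne a i with h | h <;> simp [h] <;> ring

def H2 (a i : Fin 4) (y : E4) : E4 →L[ℝ] ℝ :=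
  ((if a = i then (1:ℝ) else 0) * (-4)) •
      ((-((rr y * rr y) * (rr y * rr y))⁻¹) • (rr y • RR y + rr y • RR y)) +
  ((16 * y a * y i * rr y) •
      ((-(((rr y * rr y) * (rr y * rr y)) * ((rr y * rr y) * (rr y * rr y)))⁻¹) •
        ((rr y * rr y) • (rr y • RR y + rr y • RR y) +
          (rr y * rr y) • (rr y • RR y + rr y • RR y))) +
    (((rr y * rr y) * (rr y * rr y))⁻¹) •
      ((16 * y a * y i) • RR y +
        rr y • ((16 * y a) • (EuclideanSpace.proj (𝕜 := ℝ) i) +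
          y i • ((16:ℝ) • (EuclideanSpace.proj (𝕜 := ℝ) a)))))

lemma hH2 (a i : Fin 4) (y : E4) (hy : rr y ≠ 0) :
    HasFDerivAt (h2 a i) (H2 a i y) y := by
  unfold h2 H2
  have hr2 : rr y * rr y ≠ 0 := mul_ne_zero hy hy
  exact ((hasFDerivAt_inv'' ((hasFDerivAt_rr y).mul (hasFDerivAt_rr y)) hr2).const_mul _).add
    (((((hasFDerivAt_coord a y).const_mul (16:ℝ)).mul (hasFDerivAt_coord i y)).mul
        (hasFDerivAt_rr y)).mul
      (hasFDerivAt_inv''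
        (((hasFDerivAt_rr y).mul (hasFDerivAt_rr y)).mul
          ((hasFDerivAt_rr y).mul (hasFDerivAt_rr y))) (mul_ne_zero hr2 hr2)))

lemma sum2 (a : Fin 4) (x : E4) (hx : rr x ≠ 0) :
    ∑ i, H2 a i x (ee i) = 0 := by
  have hexp : ∀ i, H2 a i x (ee i) =
      (32 * rr x * ((rr x * rr x) * (rr x * rr x))⁻¹) * (if a = i then x i else 0) +
      (-128 * x a * (rr x * rr x * rr x * rr x) *
          (((rr x * rr x) * (rr x * rr x)) * ((rr x * rr x) * (rr x * rr x)))⁻¹ +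
        32 * x a * ((rr x * rr x) * (rr x * rr x))⁻¹) * (x i * x i) +
      (16 * x a * rr x * ((rr x * rr x) * (rr x * rr x))⁻¹) := by
    intro i
    simp only [H2, ContinuousLinearMap.add_apply, ContinuousLinearMap.smul_apply,
      smul_eq_mul, RR_apply_ee, proj_ee]
    rcases eq_or_ne a i with h | h <;> simp [h] <;> ring
  rw [Finset.sum_congr rfl fun i _ => hexp i]
  rw [Finset.sum_add_distrib, Finset.sum_add_distrib, ← Finset.mul_sum, ← Finset.mul_sum,
    Finset.sum_ite_eq, Finset.sum_const]
  simp only [Finset.mem_univ, if_true, Finset.card_univ, Fintype.card_fin, nsmul_eq_mul]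
  have hs : ∑ i, x i * x i = rr x := rfl
  rw [hs]
  field_simp
  ring

theorem lap2 (a : Fin 4) (t : ℝ) (x : E4) (hx : x ≠ 0) :
    lapProd (fun q : ℝ × E4 => q.1 * (-4 * q.2 a * (rr q.2 * rr q.2)⁻¹)) (t, x) = 0 := by
  have hrx : rr x ≠ 0 := rr_ne_zero hx
  have hU : IsOpen {y : E4 | rr y ≠ 0} := IsOpen.preimage continuous_rr isOpen_ne
  have key := lapProd_eq (fun y : E4 => -4 * y a * (rr y * rr y)⁻¹) (G2 a) (h2 a) (H2 a)
    {y : E4 | rr y ≠ 0} hU (fun y hy => hG2 a y hy) (fun i y _ => hG2_ee a i y)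
    (fun i y hy => hH2 a i y hy) t x hrx
  rw [key, sum2 a x hrx, mul_zero]

lemma ee_zero_ne : (ee 0 : E4) ≠ 0 := by
  intro h
  have h1 : (ee 0 : E4) 0 = 1 := by simp [ee, EuclideanSpace.single_apply]
  rw [h] at h1
  simp at h1

end BiharmAux

open BiharmAux in
/-- The map `F(t,x) = t·x/|x|²` on `ℝ × (ℝ⁴ \ {0})` is proper biharmonic:
`Δ²F = 0` componentwise but `ΔF ≢ 0`. -/
theorem F_proper_biharmonic :
    (∀ a : Fin 4, ∀ (t : ℝ) (x : EuclideanSpace ℝ (Fin 4)), x ≠ 0 →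
      lapProd (lapProd (fun q => q.1 * q.2 a / ‖q.2‖ ^ 2)) (t, x) = 0) ∧
    (∃ a : Fin 4, ∃ (t : ℝ) (x : EuclideanSpace ℝ (Fin 4)), x ≠ 0 ∧
      lapProd (fun q => q.1 * q.2 a / ‖q.2‖ ^ 2) (t, x) ≠ 0) := by
  constructor
  · intro a t x hx
    have hV : IsOpen {q : ℝ × E4 | q.2 ≠ 0} := IsOpen.preimage continuous_snd isOpen_ne
    have hcongr := lapProd_congr' (lapProd (fun q => q.1 * q.2 a / ‖q.2‖ ^ 2))
      (fun q : ℝ × E4 => q.1 * (-4 * q.2 a * (rr q.2 * rr q.2)⁻¹))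
      {q : ℝ × E4 | q.2 ≠ 0} hV
      (fun q hq => by
        have h := lap1 a q.1 q.2 hq
        rw [Prod.mk.eta] at h
        exact h) (t, x) hx
    rw [hcongr]
    exact lap2 a t x hx
  · refine ⟨0, 1, ee 0, ee_zero_ne, ?_⟩
    rw [lap1 0 1 (ee 0) ee_zero_ne]
    have h1 : (ee 0 : E4) 0 = 1 := by simp [ee, EuclideanSpace.single_apply]
    have h2 : rr (ee 0) = 1 := by
      rw [rr_expand]
      simp [ee, EuclideanSpace.single_apply]
    rw [h1, h2]
    norm_num
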